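/- Distinct-background subtraction is one-way only: for pairwise distinct tokens t_s, t_{b1}, t_{b2} (t_s ≠ t_{b1}, t_s ≠ t_{b2}, t_{b1} ≠ t_{b2}), rationals slo ≤ shi and blo < bhi, and dimension tag d, OneWayOnly (Sub (Add (Meas t_s slo shi d) (Meas t_{b1} blo bhi d)) (Meas t_{b2} blo bhi d)) (Meas t_s slo shi d) holds. -/

import Mathlib

/-! Token-disjoint subexpressions can be valued independently, so `Encl` commutes with `+` and `-`
on them. Since the two backgrounds carry distinct tokens they need not cancel: the enclosure of the
subtraction is `[slo, shi] + [blo, bhi] - [blo, bhi] = [slo - w, shi + w]` with `w = bhi - blo > 0`,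
which strictly contains the signal's enclosure `[slo, shi]`. -/

abbrev Token := ℕ

inductive Dim where
  | base
deriving DecidableEq

inductive Expr where
  | Exact (q : ℚ) (d : Dim)
  | Meas (t : Token) (lo hi : ℚ) (d : Dim)
  | Add (a b : Expr)
  | Sub (a b : Expr)
  | Mul (a b : Expr)
  | Div (a b : Expr)
  | Neg (a : Expr)

abbrev TokenEnv := Token → ℚ

def TokenConsistent (σ : TokenEnv) : Expr → Prop
  | .Exact _ _ => True
  | .Meas t lo hi _ => lo ≤ σ t ∧ σ t ≤ hi
  | .Add a b => TokenConsistent σ a ∧ TokenConsistent σ b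
  | .Sub a b => TokenConsistent σ a ∧ TokenConsistent σ b
  | .Mul a b => TokenConsistent σ a ∧ TokenConsistent σ b
  | .Div a b => TokenConsistent σ a ∧ TokenConsistent σ b
  | .Neg a => TokenConsistent σ a

def eval (σ : TokenEnv) : Expr → ℚ
  | .Exact q _ => q
  | .Meas t _ _ _ => σ t
  | .Add a b => eval σ a + eval σ b
  | .Sub a b => eval σ a - eval σ b
  | .Mul a b => eval σ a * eval σ b
  | .Div a b => eval σ a / eval σ b
  | .Neg a => - eval σ a

def Encl (e : Expr) : Set ℚ := {v : ℚ | ∃ σ : TokenEnv, TokenConsistent σ e ∧ eval σ e = v}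

def RewritesTo (e e' : Expr) : Prop := Encl e' ⊆ Encl e

def Interchangeable (e e' : Expr) : Prop := Encl e = Encl e'

def OneWayOnly (e e' : Expr) : Prop := RewritesTo e e' ∧ ¬ RewritesTo e' e

open scoped Pointwise

namespace Expr

def tokens : Expr → Finset Token
  | Exact _ _ => ∅
  | Meas t _ _ _ => {t}
  | Add a b | Sub a b | Mul a b | Div a b => a.tokens ∪ b.tokens
  | Neg a => a.tokens

end Expr

theorem eval_congr {σ τ : TokenEnv} (e : Expr) (h : ∀ t ∈ e.tokens, σ t = τ t) :
    eval σ e = eval τ e := by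
  induction e with
  | Exact => rfl
  | Meas t => exact h t (Finset.mem_singleton_self t)
  | Add a b iha ihb | Sub a b iha ihb | Mul a b iha ihb | Div a b iha ihb =>
    simp only [Expr.tokens, Finset.mem_union] at h
    simp only [eval, iha fun t ht => h t (.inl ht), ihb fun t ht => h t (.inr ht)]
  | Neg a ih => simp only [eval, ih h]

theorem tokenConsistent_congr {σ τ : TokenEnv} (e : Expr) (h : ∀ t ∈ e.tokens, σ t = τ t) :
    TokenConsistent σ e ↔ TokenConsistent τ e := by
  induction e with
  | Exact => rfl
  | Meas t => simp only [TokenConsistent, h t (Finset.mem_singleton_self t)]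
  | Add a b iha ihb | Sub a b iha ihb | Mul a b iha ihb | Div a b iha ihb =>
    simp only [Expr.tokens, Finset.mem_union] at h
    simp only [TokenConsistent, iha fun t ht => h t (.inl ht), ihb fun t ht => h t (.inr ht)]
  | Neg a ih => simp only [TokenConsistent, ih h]

theorem exists_env_of_disjoint {a b : Expr} (hab : Disjoint a.tokens b.tokens)
    {σ₁ σ₂ : TokenEnv} (h₁ : TokenConsistent σ₁ a) (h₂ : TokenConsistent σ₂ b) :
    ∃ σ, TokenConsistent σ a ∧ TokenConsistent σ b ∧ eval σ a = eval σ₁ a ∧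
      eval σ b = eval σ₂ b := by
  let σ : TokenEnv := fun t => if t ∈ a.tokens then σ₁ t else σ₂ t
  have hσa : ∀ t ∈ a.tokens, σ t = σ₁ t := fun t ht => if_pos ht
  have hσb : ∀ t ∈ b.tokens, σ t = σ₂ t := fun t ht =>
    if_neg (Finset.disjoint_right.1 hab ht)
  exact ⟨σ, (tokenConsistent_congr a hσa).2 h₁, (tokenConsistent_congr b hσb).2 h₂,
    eval_congr a hσa, eval_congr b hσb⟩

theorem encl_meas (t : Token) (lo hi : ℚ) (d : Dim) :
    Encl (.Meas t lo hi d) = Set.Icc lo hi := by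
  ext v
  exact ⟨fun ⟨σ, hσ, hv⟩ => hv ▸ hσ, fun hv => ⟨fun _ => v, hv, rfl⟩⟩

theorem encl_add_of_disjoint {a b : Expr} (hab : Disjoint a.tokens b.tokens) :
    Encl (.Add a b) = Encl a + Encl b := by
  ext v
  constructor
  · rintro ⟨σ, ⟨ha, hb⟩, rfl⟩
    exact Set.add_mem_add ⟨σ, ha, rfl⟩ ⟨σ, hb, rfl⟩
  · rintro ⟨_, ⟨σ₁, h₁, rfl⟩, _, ⟨σ₂, h₂, rfl⟩, rfl⟩
    obtain ⟨σ, ha, hb, hva, hvb⟩ := exists_env_of_disjoint hab h₁ h₂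
    exact ⟨σ, ⟨ha, hb⟩, by rw [eval, hva, hvb]⟩

theorem encl_sub_of_disjoint {a b : Expr} (hab : Disjoint a.tokens b.tokens) :
    Encl (.Sub a b) = Encl a - Encl b := by
  ext v
  constructor
  · rintro ⟨σ, ⟨ha, hb⟩, rfl⟩
    exact Set.sub_mem_sub ⟨σ, ha, rfl⟩ ⟨σ, hb, rfl⟩
  · rintro ⟨_, ⟨σ₁, h₁, rfl⟩, _, ⟨σ₂, h₂, rfl⟩, rfl⟩
    obtain ⟨σ, ha, hb, hva, hvb⟩ := exists_env_of_disjoint hab h₁ h₂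
    exact ⟨σ, ⟨ha, hb⟩, by rw [eval, hva, hvb]⟩

theorem Icc_add_Icc_sub_Icc {α : Type*} [AddCommGroup α] [LinearOrder α] [IsOrderedAddMonoid α]
    {a b c d e f : α} (hab : a ≤ b) (hcd : c ≤ d) (hef : e ≤ f) :
    Set.Icc a b + Set.Icc c d - Set.Icc e f = Set.Icc (a + c - f) (b + d - e) := by
  rw [sub_eq_add_neg, Set.neg_Icc, Set.Icc_add_Icc hab hcd,
    Set.Icc_add_Icc (add_le_add hab hcd) (neg_le_neg hef), ← sub_eq_add_neg, ← sub_eq_add_neg]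

theorem distinct_background_subtraction_one_way_only_to_signal
    (ts tb₁ tb₂ : Token) (h₁ : ts ≠ tb₁) (h₂ : ts ≠ tb₂) (h₃ : tb₁ ≠ tb₂)
    (slo shi blo bhi : ℚ) (hs : slo ≤ shi) (hb : blo < bhi) (d : Dim) :
    OneWayOnly
      (.Sub (.Add (.Meas ts slo shi d) (.Meas tb₁ blo bhi d)) (.Meas tb₂ blo bhi d))
      (.Meas ts slo shi d) := by
  have hencl :
      Encl (.Sub (.Add (.Meas ts slo shi d) (.Meas tb₁ blo bhi d)) (.Meas tb₂ blo bhi d)) =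
        Set.Icc (slo + blo - bhi) (shi + bhi - blo) := by
    rw [encl_sub_of_disjoint (by simp [Expr.tokens, h₂.symm, h₃.symm]),
      encl_add_of_disjoint (by simpa [Expr.tokens] using h₁), encl_meas, encl_meas, encl_meas,
      Icc_add_Icc_sub_Icc hs hb.le hb.le]
  show Encl _ ⊂ _
  rw [hencl, encl_meas]
  exact Set.Icc_ssubset_Icc_right (by linarith) (by linarith) (by linarith)
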